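/- Let M and N be topological spaces equipped with finite cofibred filtrations {M_n}_{n∈ℕ} and {N_n}_{n∈ℕ} (so there is an L with M_n = M and N_n = N for all n ≥ L). Let F : M → N be a filtered map such that for every n ∈ ℕ the restriction F_n = F|_{M_n} : M_n → N_n is a homotopy equivalence. Then F is a filtered homotopy equivalence. -/
import Mathlib


open unitInterval Metric Set

noncomputable section

universe u

/-- The homotopy extension property for the inclusion of the subspace `A` into `X`. -/
def HasHEP (X : Type u) [TopologicalSpace X] (A : Set X) : Prop :=
  ∀ (Y : Type u) [TopologicalSpace Y] (f : C(X, Y)) (H : C(↥A × I, Y)),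
    (∀ a : ↥A, H (a, 0) = f ↑a) →
      ∃ G : C(X × I, Y), (∀ x, G (x, 0) = f x) ∧ ∀ (a : ↥A) (t : I), G (↑a, t) = H (a, t)

/-- The inclusion of `A` into `X` is a closed cofibration: it is a closed embedding (i.e. the
inclusion of a closed subspace) having the homotopy extension property. -/
def IsClosedCofibration (X : Type u) [TopologicalSpace X] (A : Set X) : Prop :=
  IsClosed A ∧ HasHEP X A

section Maps

variable {X Y : Type*} [TopologicalSpace X] [TopologicalSpace Y]

/-- The restriction of a continuous map to subspaces of its source and target. -/
def restrictCM (f : C(X, Y)) {s : Set X} {t : Set Y} (h : MapsTo f s t) : C(↥s, ↥t) :=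
  ⟨fun x => ⟨f ↑x, h x.2⟩, ((map_continuous f).comp continuous_subtype_val).subtype_mk _⟩

/-- The inclusion of a smaller subspace into a bigger one, as a continuous map. -/
def inclusionCM {s t : Set X} (h : s ⊆ t) : C(↥s, ↥t) :=
  ⟨Set.inclusion h, continuous_inclusion h⟩

/-- A continuous map `f : X → Y` is a homotopy equivalence: it admits a homotopy inverse. -/
def IsHomotopyEquivMap (f : C(X, Y)) : Prop :=
  ∃ g : C(Y, X),
    (∃ H : C(X × I, X), (∀ x, H (x, 0) = g (f x)) ∧ ∀ x, H (x, 1) = x) ∧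
    (∃ K : C(Y × I, Y), (∀ y, K (y, 0) = f (g y)) ∧ ∀ y, K (y, 1) = y)

/-- A filtered map between filtered spaces: it maps each stage of the filtration of the source
into the corresponding stage of the filtration of the target. -/
def IsFilteredMap (Xf : ℕ → Set X) (Yf : ℕ → Set Y) (f : C(X, Y)) : Prop :=
  ∀ n, MapsTo f (Xf n) (Yf n)

/-- A filtered homotopy: at each time `t` it maps each stage of the filtration of the source into
the corresponding stage of the filtration of the target. -/
def IsFilteredHomotopy (Xf : ℕ → Set X) (Yf : ℕ → Set Y) (H : C(X × I, Y)) : Prop :=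
  ∀ n, ∀ x ∈ Xf n, ∀ t : I, H (x, t) ∈ Yf n

/-- `g` is a filtered homotopy inverse of the filtered map `f`: `g` is filtered and `g ∘ f`,
`f ∘ g` are connected to the respective identities by filtered homotopies. -/
def IsFilteredHomotopyInverse (Xf : ℕ → Set X) (Yf : ℕ → Set Y)
    (f : C(X, Y)) (g : C(Y, X)) : Prop :=
  IsFilteredMap Xf Yf f ∧ IsFilteredMap Yf Xf g ∧
    (∃ H : C(X × I, X), IsFilteredHomotopy Xf Xf H ∧
      (∀ x, H (x, 0) = g (f x)) ∧ ∀ x, H (x, 1) = x) ∧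
    (∃ K : C(Y × I, Y), IsFilteredHomotopy Yf Yf K ∧
      (∀ y, K (y, 0) = f (g y)) ∧ ∀ y, K (y, 1) = y)

/-- A filtered map is a filtered homotopy equivalence if it admits a filtered homotopy inverse. -/
def IsFilteredHomotopyEquiv (Xf : ℕ → Set X) (Yf : ℕ → Set Y) (f : C(X, Y)) : Prop :=
  ∃ g : C(Y, X), IsFilteredHomotopyInverse Xf Yf f g

/-- A deformation retraction of the ambient space onto the subspace `A`. -/
def IsDeformationRetraction (ρ : C(X × I, X)) (A : Set X) : Prop :=
  (∀ x, ρ (x, 0) = x) ∧ (∀ x, ρ (x, 1) ∈ A) ∧ ∀ a ∈ A, ∀ t : I, ρ (a, t) = a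

end Maps

/-!
STATEMENT 0: If `M` and `N` carry finite cofibred filtrations and `F : M → N` is a filtered map
all of whose restrictions `F_n : M_n → N_n` are homotopy equivalences, then `F` is a filtered
homotopy equivalence.
-/

section Maps

variable {X Y Z : Type*} [TopologicalSpace X] [TopologicalSpace Y] [TopologicalSpace Z]

/-- start of a cylinder map -/
def cstart (W : C(X × I, Y)) : C(X, Y) := W.comp ⟨fun x => (x, 0), by fun_prop⟩

def cend (W : C(X × I, Y)) : C(X, Y) := W.comp ⟨fun x => (x, 1), by fun_prop⟩

@[simp] lemma cstart_apply (W : C(X × I, Y)) (x : X) : cstart W x = W (x, 0) := rfl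
@[simp] lemma cend_apply (W : C(X × I, Y)) (x : X) : cend W x = W (x, 1) := rfl

def toHt (W : C(X × I, Y)) : (cstart W).Homotopy (cend W) :=
  { toFun := fun p => W (p.2, p.1)
    continuous_toFun := by fun_prop
    map_zero_left := fun x => rfl
    map_one_left := fun x => rfl }

@[simp] lemma toHt_apply (W : C(X × I, Y)) (p : ↥I × X) : toHt W p = W (p.2, p.1) := rfl

def toHt' (W : C(X × I, Y)) {f g : C(X,Y)} (h0 : ∀ x, W (x,0) = f x) (h1 : ∀ x, W (x,1) = g x) :
    f.Homotopy g :=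
  { toFun := fun p => W (p.2, p.1)
    continuous_toFun := by fun_prop
    map_zero_left := fun x => h0 x
    map_one_left := fun x => h1 x }

/-- concatenation of cylinder maps -/
def hconcatHt (W V : C(X × I, Y)) (h : ∀ x, W (x, 1) = V (x, 0)) :
    (cstart W).Homotopy (cend V) :=
  (toHt W).trans (toHt' V (f := cend W) (g := cend V) (fun x => (h x).symm) (fun _ => rfl))

def hconcat (W V : C(X × I, Y)) (h : ∀ x, W (x, 1) = V (x, 0)) : C(X × I, Y) :=
  { toFun := fun p => hconcatHt W V h (p.2, p.1)
    continuous_toFun := (hconcatHt W V h).continuous.comp (by fun_prop) }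

lemma hconcat_zero (W V : C(X × I, Y)) (h) (x : X) : hconcat W V h (x, 0) = W (x, 0) :=
  (hconcatHt W V h).apply_zero x

lemma hconcat_one (W V : C(X × I, Y)) (h) (x : X) : hconcat W V h (x, 1) = V (x, 1) :=
  (hconcatHt W V h).apply_one x

lemma hconcat_cases (W V : C(X × I, Y)) (h) (x : X) (t : I) :
    (∃ s, hconcat W V h (x, t) = W (x, s)) ∨ (∃ s, hconcat W V h (x, t) = V (x, s)) := by
  rw [show hconcat W V h (x, t) = hconcatHt W V h (t, x) from rfl, hconcatHt,
    ContinuousMap.Homotopy.trans_apply]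
  split
  · exact Or.inl ⟨_, rfl⟩
  · exact Or.inr ⟨_, rfl⟩

/-- time-reversal -/
def hsymm (W : C(X × I, Y)) : C(X × I, Y) :=
  W.comp ⟨fun p => (p.1, unitInterval.symm p.2), by fun_prop⟩

@[simp] lemma hsymm_apply (W : C(X × I, Y)) (p : X × I) :
    hsymm W p = W (p.1, unitInterval.symm p.2) := rfl

lemma hsymm_zero (W : C(X × I, Y)) (x : X) : hsymm W (x, 0) = W (x, 1) := by simp
lemma hsymm_one (W : C(X × I, Y)) (x : X) : hsymm W (x, 1) = W (x, 0) := by simp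

/-- postcomposition -/
def hcompL (φ : C(Y, Z)) (W : C(X × I, Y)) : C(X × I, Z) := φ.comp W

/-- precomposition with a map on the space variable -/
def hcompR (W : C(X × I, Y)) (φ : C(Z, X)) : C(Z × I, Y) :=
  W.comp (φ.prodMap (ContinuousMap.id I))

@[simp] lemma hcompL_apply (φ : C(Y, Z)) (W : C(X × I, Y)) (p : X × I) :
    hcompL φ W p = φ (W p) := rfl

@[simp] lemma hcompR_apply (W : C(X × I, Y)) (φ : C(Z, X)) (p : Z × I) :
    hcompR W φ p = W (φ p.1, p.2) := rfl

end Maps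

lemma qmem (s t : I) : (1 - (s:ℝ)) * min (2*(t:ℝ)) (2 - 2*(t:ℝ)) ∈ I := by
  obtain ⟨hs0, hs1⟩ := s.2
  obtain ⟨ht0, ht1⟩ := t.2
  constructor
  · have : (0:ℝ) ≤ min (2*(t:ℝ)) (2 - 2*(t:ℝ)) := le_min (by linarith) (by linarith)
    nlinarith
  · rcases le_total ((t:ℝ)) (1/2) with h | h
    · have : min (2*(t:ℝ)) (2 - 2*(t:ℝ)) ≤ 1 := le_trans (min_le_left _ _) (by linarith)
      nlinarith
    · have : min (2*(t:ℝ)) (2 - 2*(t:ℝ)) ≤ 1 := le_trans (min_le_right _ _) (by linarith)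
      nlinarith

def qmap : C(I × I, I) :=
  ⟨fun p => ⟨(1 - (p.1:ℝ)) * min (2*(p.2:ℝ)) (2 - 2*(p.2:ℝ)), qmem p.1 p.2⟩, by
    apply Continuous.subtype_mk
    fun_prop⟩

lemma qmap_coe (s t : I) :
    (qmap (s, t) : ℝ) = (1 - (s:ℝ)) * min (2*(t:ℝ)) (2 - 2*(t:ℝ)) := rfl

lemma qmap_right0 (s : I) : qmap (s, 0) = 0 := by
  apply Subtype.ext; rw [qmap_coe]; norm_num
lemma qmap_right1 (s : I) : qmap (s, 1) = 0 := by
  apply Subtype.ext; rw [qmap_coe]; norm_num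
lemma qmap_left1 (t : I) : qmap (1, t) = 0 := by
  apply Subtype.ext; rw [qmap_coe]; norm_num

section Dold
variable {X : Type u} [TopologicalSpace X]

/-- the extra apply lemmas for hconcat -/
lemma hconcat_left {Y : Type*} [TopologicalSpace Y] (W V : C(X × I, Y)) (h) (x : X) (t : I)
    (ht : (t:ℝ) ≤ 1/2) (m : (2:ℝ)*(t:ℝ) ∈ I) :
    hconcat W V h (x, t) = W (x, ⟨2*(t:ℝ), m⟩) := by
  rw [show hconcat W V h (x, t) = hconcatHt W V h (t, x) from rfl, hconcatHt,
    ContinuousMap.Homotopy.trans_apply]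
  rw [dif_pos ht]
  rfl

lemma hconcat_right {Y : Type*} [TopologicalSpace Y] (W V : C(X × I, Y)) (h) (x : X) (t : I)
    (ht : ¬ ((t:ℝ) ≤ 1/2)) (m : (2:ℝ)*(t:ℝ) - 1 ∈ I) :
    hconcat W V h (x, t) = V (x, ⟨2*(t:ℝ) - 1, m⟩) := by
  rw [show hconcat W V h (x, t) = hconcatHt W V h (t, x) from rfl, hconcatHt,
    ContinuousMap.Homotopy.trans_apply]
  rw [dif_neg ht]
  rfl

def ιCM (A : Set X) : C(↥A, X) := ⟨Subtype.val, continuous_subtype_val⟩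

lemma dold_one {A : Set X} (hep : HasHEP X A)
    (φ : C(X, X)) (hφ : ∀ a ∈ A, φ a = a)
    (D : C(X × I, X)) (hD0 : ∀ x, D (x, 0) = x) (hD1 : ∀ x, D (x, 1) = φ x) :
    ∃ (ψ : C(X, X)) (E P : C(X × I, X)),
      (∀ a ∈ A, ψ a = a) ∧
      (∀ x, E (x, 0) = x) ∧ (∀ x, E (x, 1) = ψ x) ∧
      (∀ x, P (x, 0) = ψ (φ x)) ∧ (∀ x, P (x, 1) = x) ∧
      (∀ a ∈ A, ∀ t, P (a, t) = a) := by
  classical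
  set γ : C(↥A × I, X) := hcompR D (ιCM A) with hγ
  have hγ0 : ∀ a : ↥A, γ (a, 0) = (a : X) := fun a => hD0 _
  have hγ1 : ∀ a : ↥A, γ (a, 1) = (a : X) := fun a => by
    show D ((a:X), 1) = _; rw [hD1]; exact hφ _ a.2
  -- extend the reversed track to get ψ
  obtain ⟨E, hE0, hEA⟩ := hep X (ContinuousMap.id X) (hsymm γ)
    (fun a => by show γ (a, σ 0) = _; simp only [unitInterval.symm_zero]; exact hγ1 a)
  set ψ := cend E with hψdef
  have hψA : ∀ a ∈ A, ψ a = a := by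
    intro a ha
    show E (a, 1) = a
    have h2 := hEA ⟨a, ha⟩ 1
    simp only [hsymm_apply, unitInterval.symm_one] at h2
    rw [h2]
    exact hγ0 ⟨a, ha⟩
  -- the composite free homotopy W : id ≃ ψ ∘ φ
  have hWc : ∀ x, D (x, 1) = hcompR E φ (x, 0) := fun x => by
    simp only [hcompR_apply]; rw [hD1, hE0]; rfl
  set W : C(X × I, X) := hconcat D (hcompR E φ) hWc with hWdef
  -- the square-shaped correction on A
  set Φ : C((↥A × I) × I, X) :=
    γ.comp ⟨fun p => (p.1.1, qmap (p.1.2, p.2)), by fun_prop⟩ with hΦdef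
  have hΦ_apply : ∀ a s t, Φ ((a, s), t) = γ (a, qmap (s, t)) := fun a s t => rfl
  have hagree : ∀ a : ↥A, Φ.curry (a, 0) = W.curry ((a : X)) := by
    intro a
    ext t
    show Φ ((a, 0), t) = W ((a:X), t)
    rw [hΦ_apply]
    obtain ⟨ht0, ht1⟩ := t.2
    rcases le_or_gt ((t:ℝ)) (1/2) with ht | ht
    · rw [hconcat_left D (hcompR E φ) hWc _ t ht ⟨by linarith, by linarith⟩]
      have hq : qmap (0, t) = ⟨2*(t:ℝ), ⟨by linarith, by linarith⟩⟩ := by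
        apply Subtype.ext
        rw [qmap_coe]
        rw [min_eq_left (by linarith)]
        norm_num
      rw [hq]
      rfl
    · rw [hconcat_right D (hcompR E φ) hWc _ t (not_le.2 ht) ⟨by linarith, by linarith⟩]
      simp only [hcompR_apply]
      rw [hφ _ a.2]
      rw [show ((a:X)) = ((a : ↥A) : X) from rfl, hEA a ⟨2*(t:ℝ) - 1, by constructor <;> linarith⟩]
      simp only [hsymm_apply]
      have hq : qmap (0, t) = σ ⟨2*(t:ℝ) - 1, by constructor <;> linarith⟩ := by
        apply Subtype.ext
        rw [qmap_coe, unitInterval.coe_symm_eq]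
        show (1 - ((0:I):ℝ)) * _ = _
        simp only [Set.Icc.coe_zero]
        rw [min_eq_right (by linarith)]
        ring
      rw [hq]
  -- extend the correction over X using HEP with target the path space
  obtain ⟨Gh, hGh0, hGhA⟩ := hep (C(I, X)) W.curry Φ.curry hagree
  set V : C((X × I) × I, X) := Gh.uncurry with hVdef
  have hV : ∀ x s t, V ((x, s), t) = Gh (x, s) t := fun x s t => rfl
  have hV0 : ∀ x t, V ((x, 0), t) = W (x, t) := by
    intro x t; rw [hV, hGh0]; rfl
  have hVA : ∀ (a : ↥A) s t, V (((a:X), s), t) = γ (a, qmap (s, t)) := by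
    intro a s t; rw [hV, hGhA]; rfl
  set E₀ : C(X × I, X) := V.comp ⟨fun p => ((p.1, p.2), 0), by fun_prop⟩ with hE₀def
  set E₁ : C(X × I, X) := V.comp ⟨fun p => ((p.1, p.2), 1), by fun_prop⟩ with hE₁def
  set W' : C(X × I, X) := V.comp ⟨fun p => ((p.1, 1), p.2), by fun_prop⟩ with hW'def
  have c1 : ∀ x, E₀ (x, 1) = W' (x, 0) := fun x => rfl
  have c2 : ∀ x, hconcat E₀ W' c1 (x, 1) = hsymm E₁ (x, 0) := by
    intro x
    rw [hconcat_one, hsymm_zero]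
    rfl
  set P0 : C(X × I, X) := hconcat (hconcat E₀ W' c1) (hsymm E₁) c2 with hP0def
  set P : C(X × I, X) := hsymm P0 with hPdef
  have relA : ∀ a ∈ A, ∀ t : I, P (a, t) = a := by
    intro a ha t
    show P0 (a, _) = a
    have key : ∀ s : I, (∀ u, E₀ ((a:X), u) = a) ∧ (∀ u, W' ((a:X), u) = a) ∧
        (∀ u, E₁ ((a:X), u) = a) := by
      intro s
      refine ⟨fun u => ?_, fun u => ?_, fun u => ?_⟩
      · show V ((((⟨a, ha⟩ : ↥A) : X), u), 0) = _
        rw [hVA, qmap_right0]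
        exact hγ0 _
      · show V ((((⟨a, ha⟩ : ↥A) : X), 1), u) = _
        rw [hVA, qmap_left1]
        exact hγ0 _
      · show V ((((⟨a, ha⟩ : ↥A) : X), u), 1) = _
        rw [hVA, qmap_right1]
        exact hγ0 _
    obtain ⟨k0, k1, k2⟩ := key 0
    rcases hconcat_cases (hconcat E₀ W' c1) (hsymm E₁) c2 a (σ t) with ⟨s, hs⟩ | ⟨s, hs⟩
    · rw [hs]
      rcases hconcat_cases E₀ W' c1 a s with ⟨u, hu⟩ | ⟨u, hu⟩
      · rw [hu]; exact k0 u
      · rw [hu]; exact k1 u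
    · rw [hs, hsymm_apply]
      exact k2 _
  refine ⟨ψ, E, P, hψA, hE0, fun x => rfl, ?_, ?_, relA⟩
  · intro x
    show P0 (x, σ 0) = _
    rw [unitInterval.symm_zero, hconcat_one, hsymm_one]
    show V ((x, 0), 1) = _
    rw [hV0]
    rw [hconcat_one]
    simp only [hcompR_apply]
    rfl
  · intro x
    show P0 (x, σ 1) = _
    rw [unitInterval.symm_one, hconcat_zero, hconcat_zero]
    show V ((x, 0), 0) = _
    rw [hV0, hconcat_zero, hD0]

end Dold

section Dold2
variable {X : Type u} [TopologicalSpace X]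

lemma dold_two {A : Set X} (hep : HasHEP X A)
    (φ : C(X, X)) (hφ : ∀ a ∈ A, φ a = a)
    (D : C(X × I, X)) (hD0 : ∀ x, D (x, 0) = x) (hD1 : ∀ x, D (x, 1) = φ x) :
    ∃ (ψ : C(X, X)) (E P P' : C(X × I, X)),
      (∀ a ∈ A, ψ a = a) ∧
      (∀ x, E (x, 0) = x) ∧ (∀ x, E (x, 1) = ψ x) ∧
      (∀ x, P (x, 0) = ψ (φ x)) ∧ (∀ x, P (x, 1) = x) ∧ (∀ a ∈ A, ∀ t, P (a, t) = a) ∧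
      (∀ x, P' (x, 0) = φ (ψ x)) ∧ (∀ x, P' (x, 1) = x) ∧ (∀ a ∈ A, ∀ t, P' (a, t) = a) := by
  obtain ⟨ψ, E, P, hψA, hE0, hE1, hP0, hP1, hPA⟩ := dold_one hep φ hφ D hD0 hD1
  obtain ⟨χ, Eχ, Q, hχA, _, _, hQ0, hQ1, hQA⟩ := dold_one hep ψ hψA E hE0 hE1
  set p1 : C(X × I, X) := hsymm (hcompR Q (φ.comp ψ)) with hp1
  set p2 : C(X × I, X) := hcompL χ (hcompR P ψ) with hp2
  have e12 : ∀ x, p1 (x, 1) = p2 (x, 0) := by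
    intro x
    simp only [hp1, hp2, hsymm_apply, hcompR_apply, hcompL_apply, unitInterval.symm_one]
    rw [hQ0, hP0]
    rfl
  have e23 : ∀ x, hconcat p1 p2 e12 (x, 1) = Q (x, 0) := by
    intro x
    rw [hconcat_one, hQ0]
    simp only [hp2, hcompL_apply, hcompR_apply]
    rw [hP1]
  refine ⟨ψ, E, P, hconcat (hconcat p1 p2 e12) Q e23, hψA, hE0, hE1, hP0, hP1, hPA,
    ?_, ?_, ?_⟩
  · intro x
    rw [hconcat_zero, hconcat_zero]
    simp only [hp1, hsymm_apply, hcompR_apply, unitInterval.symm_zero]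
    rw [hQ1]
    rfl
  · intro x
    rw [hconcat_one, hQ1]
  · intro a ha t
    have k1 : ∀ s, p1 (a, s) = a := by
      intro s
      simp only [hp1, hsymm_apply, hcompR_apply, ContinuousMap.comp_apply]
      rw [show ψ a = a from hψA a ha, show φ a = a from hφ a ha]
      exact hQA a ha _
    have k2 : ∀ s, p2 (a, s) = a := by
      intro s
      simp only [hp2, hcompL_apply, hcompR_apply, ContinuousMap.comp_apply]
      rw [show ψ a = a from hψA a ha, hPA a ha, hχA a ha]
    rcases hconcat_cases (hconcat p1 p2 e12) Q e23 a t with ⟨s, hs⟩ | ⟨s, hs⟩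
    · rw [hs]
      rcases hconcat_cases p1 p2 e12 a s with ⟨u, hu⟩ | ⟨u, hu⟩
      · rw [hu]; exact k1 u
      · rw [hu]; exact k2 u
    · rw [hs]; exact hQA a ha s

end Dold2

section Step

variable {M N : Type u} [TopologicalSpace M] [TopologicalSpace N]

/-- Inductive invariant: a filtered homotopy inverse for the restriction of `F`
to the `k`-th stages. -/
def GoodInv (Mf : ℕ → Set M) (Nf : ℕ → Set N) (F : C(M, N)) (k : ℕ)
    (hFk : MapsTo F (Mf k) (Nf k)) : Prop :=
  ∃ g : C(↥(Nf k), ↥(Mf k)),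
    (∀ j (y : ↥(Nf k)), (y : N) ∈ Nf j → ((g y : M) ∈ Mf j)) ∧
    (∃ H : C(↥(Mf k) × I, ↥(Mf k)),
      (∀ j (x : ↥(Mf k)) (t : I), (x : M) ∈ Mf j → ((H (x, t) : M) ∈ Mf j)) ∧
      (∀ x, H (x, 0) = g (restrictCM F hFk x)) ∧ (∀ x, H (x, 1) = x)) ∧
    (∃ K : C(↥(Nf k) × I, ↥(Nf k)),
      (∀ j (y : ↥(Nf k)) (t : I), (y : N) ∈ Nf j → ((K (y, t) : N) ∈ Nf j)) ∧
      (∀ y, K (y, 0) = restrictCM F hFk (g y)) ∧ (∀ y, K (y, 1) = y))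

lemma step (Mf : ℕ → Set M) (Nf : ℕ → Set N) (hMmono : Monotone Mf) (hNmono : Monotone Nf)
    (k : ℕ)
    (hMhep : HasHEP ↥(Mf (k + 1)) {x : ↥(Mf (k + 1)) | (x : M) ∈ Mf k})
    (hNhep : HasHEP ↥(Nf (k + 1)) {y : ↥(Nf (k + 1)) | (y : N) ∈ Nf k})
    (F : C(M, N)) (hF : IsFilteredMap Mf Nf F)
    (ih : GoodInv Mf Nf F k (hF k))
    (he : IsHomotopyEquivMap (restrictCM F (hF (k + 1)))) :
    GoodInv Mf Nf F (k + 1) (hF (k + 1)) := by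
  classical
  obtain ⟨g0, hg0, ⟨H0, hH0fil, hH00, hH01⟩, ⟨K0, hK0fil, hK00, hK01⟩⟩ := ih
  obtain ⟨g', ⟨H', hH'0, hH'1⟩, ⟨K', hK'0, hK'1⟩⟩ := he
  set X := ↥(Mf (k + 1))
  set Y := ↥(Nf (k + 1))
  set A : Set X := {x : X | (x : M) ∈ Mf k} with hAdef
  set B : Set Y := {y : Y | (y : N) ∈ Nf k} with hBdef
  set f : C(X, Y) := restrictCM F (hF (k + 1)) with hfdef
  set fk : C(↥(Mf k), ↥(Nf k)) := restrictCM F (hF k) with hfkdef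
  -- transport maps
  set eA : C(↥A, ↥(Mf k)) := ⟨fun α => ⟨(α : X), α.2⟩,
    (continuous_subtype_val.comp continuous_subtype_val).subtype_mk _⟩ with heA
  set eB : C(↥B, ↥(Nf k)) := ⟨fun β => ⟨(β : Y), β.2⟩,
    (continuous_subtype_val.comp continuous_subtype_val).subtype_mk _⟩ with heB
  set ιM : C(↥(Mf k), X) := ⟨fun m => ⟨(m : M), hMmono (Nat.le_succ k) m.2⟩,
    continuous_subtype_val.subtype_mk _⟩ with hιM
  set ιN : C(↥(Nf k), Y) := ⟨fun m => ⟨(m : N), hNmono (Nat.le_succ k) m.2⟩,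
    continuous_subtype_val.subtype_mk _⟩ with hιN
  have hAmem : ∀ (m : ↥(Mf k)), (ιM m) ∈ A := fun m => m.2
  have hBmem : ∀ (m : ↥(Nf k)), (ιN m) ∈ B := fun m => m.2
  have hcomm : ∀ m : ↥(Mf k), ιN (fk m) = f (ιM m) := fun m => Subtype.ext rfl
  have hfA : ∀ α : ↥A, (f (α : X)) ∈ B := fun α => hF k α.2
  -- the level-k inverse, pushed into X
  set gk : C(↥B, X) := ιM.comp (g0.comp eB) with hgk
  have hgkA : ∀ β : ↥B, (gk β) ∈ A := fun β => (g0 (eB β)).2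
  -- ********** Step A : correct g' to g with g|B = gk **********
  set Kb : C(↥B × I, Y) := (ιN.comp K0).comp (eB.prodMap (ContinuousMap.id I)) with hKb
  have hKb_apply : ∀ (β : ↥B) (t : I), Kb (β, t) = ιN (K0 (eB β, t)) := fun β t => rfl
  have hKb0 : ∀ β : ↥B, Kb (β, 0) = f (ιM (g0 (eB β))) := by
    intro β
    rw [hKb_apply, hK00, hcomm]
  have hKb1 : ∀ β : ↥B, Kb (β, 1) = (β : Y) := by
    intro β
    rw [hKb_apply, hK01]
    exact Subtype.ext rfl
  have hΛc : ∀ β : ↥B, hcompL g' (hsymm Kb) (β, 1) = hcompR H' gk (β, 0) := by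
    intro β
    simp only [hcompL_apply, hsymm_apply, hcompR_apply, unitInterval.symm_one]
    rw [hKb0, hH'0]
    rfl
  set Λ : C(↥B × I, X) := hconcat (hcompL g' (hsymm Kb)) (hcompR H' gk) hΛc with hΛ
  obtain ⟨G, hG0, hGB⟩ := hNhep X g' Λ (by
    intro β
    rw [hΛ, hconcat_zero]
    simp only [hcompL_apply, hsymm_apply, unitInterval.symm_zero]
    rw [hKb1])
  set g : C(Y, X) := cend G with hgdef
  have hgB : ∀ β : ↥B, g (β : Y) = gk β := by
    intro β
    show G ((β : Y), 1) = _
    rw [hGB, hΛ, hconcat_one]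
    simp only [hcompR_apply]
    rw [hH'1]
  -- ********** deform g∘f to a map under A **********
  set HA : C(↥A × I, X) := (ιM.comp H0).comp (eA.prodMap (ContinuousMap.id I)) with hHA
  have hHA_apply : ∀ (α : ↥A) (t : I), HA (α, t) = ιM (H0 (eA α, t)) := fun α t => rfl
  set a : C(X, X) := g.comp f with hadef
  have hHA0 : ∀ α : ↥A, HA (α, 0) = a (α : X) := by
    intro α
    rw [hHA_apply, hH00]
    have h1 : f (α : X) = ((⟨f (α : X), hfA α⟩ : ↥B) : Y) := rfl
    show ιM (g0 (fk (eA α))) = g (f (α : X))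
    rw [h1, hgB ⟨f (α : X), hfA α⟩]
    have h2 : fk (eA α) = eB ⟨f (α : X), hfA α⟩ := Subtype.ext rfl
    rw [h2]
    rfl
  have hHA1 : ∀ α : ↥A, HA (α, 1) = (α : X) := by
    intro α
    rw [hHA_apply, hH01]
    exact Subtype.ext rfl
  obtain ⟨R, hR0, hRA⟩ := hMhep X a HA (fun α => hHA0 α)
  set a₁ : C(X, X) := cend R with ha₁
  have ha₁A : ∀ x ∈ A, a₁ x = x := by
    intro x hx
    show R (x, 1) = x
    have := hRA ⟨x, hx⟩ 1
    rw [show ((⟨x, hx⟩ : ↥A) : X) = x from rfl] at this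
    rw [this, hHA1 ⟨x, hx⟩]
  -- free homotopy id ≃ a₁
  have hc1 : ∀ x : X, hsymm H' (x, 1) = hcompR G f (x, 0) := by
    intro x
    simp only [hsymm_apply, hcompR_apply, unitInterval.symm_one]
    rw [hH'0, hG0]
  have hc2 : ∀ x : X, hconcat (hsymm H') (hcompR G f) hc1 (x, 1) = R (x, 0) := by
    intro x
    rw [hconcat_one, hR0]
    rfl
  set D : C(X × I, X) := hconcat (hconcat (hsymm H') (hcompR G f) hc1) R hc2 with hD
  have hD0 : ∀ x, D (x, 0) = x := by
    intro x
    rw [hD, hconcat_zero, hconcat_zero]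
    simp only [hsymm_apply, unitInterval.symm_zero]
    rw [hH'1]
  have hD1 : ∀ x, D (x, 1) = a₁ x := by
    intro x
    rw [hD, hconcat_one]
    rfl
  obtain ⟨ψ, Eψ, P, P', hψA, hEψ0, hEψ1, hP0, hP1, hPA, hP'0, hP'1, hP'A⟩ :=
    dold_two hMhep a₁ ha₁A D hD0 hD1
  -- left filtered inverse data
  set gs : C(Y, X) := ψ.comp g with hgs
  have hNc : ∀ x : X, hcompL ψ R (x, 1) = P (x, 0) := by
    intro x
    simp only [hcompL_apply]
    rw [hP0]
    rfl
  set Nh : C(X × I, X) := hconcat (hcompL ψ R) P hNc with hNh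
  have hNh0 : ∀ x, Nh (x, 0) = gs (f x) := by
    intro x
    rw [hNh, hconcat_zero]
    simp only [hcompL_apply]
    rw [hR0]
    rfl
  have hNh1 : ∀ x, Nh (x, 1) = x := by
    intro x
    rw [hNh, hconcat_one, hP1]
  -- filteredness of Nh
  have hNhfil : ∀ j (x : X) (t : I), (x : M) ∈ Mf j → ((Nh (x, t) : X) : M) ∈ Mf j := by
    intro j x t hx
    rcases le_or_gt j k with hj | hj
    · have hxA : x ∈ A := hMmono hj hx
      have hHAj : ∀ s : I, ((HA (⟨x, hxA⟩, s) : X) : M) ∈ Mf j := by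
        intro s
        rw [hHA_apply]
        exact hH0fil j _ s hx
      rcases hconcat_cases (hcompL ψ R) P hNc x t with ⟨s, hs⟩ | ⟨s, hs⟩
      · rw [hNh, hs]
        simp only [hcompL_apply]
        have hr : R (x, s) = HA (⟨x, hxA⟩, s) := hRA ⟨x, hxA⟩ s
        have hmem : HA (⟨x, hxA⟩, s) ∈ A := hH0fil k (eA ⟨x, hxA⟩) s hxA
        rw [hr, hψA _ hmem]
        exact hHAj s
      · rw [hNh, hs, hPA x hxA s]
        exact hx
    · exact hMmono hj (Nh (x, t)).2
  -- ********** Step B : the Y side **********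
  have hgsA : ∀ β : ↥B, gs (β : Y) = gk β := by
    intro β
    show ψ (g (β : Y)) = _
    rw [hgB, hψA _ (hgkA β)]
  set b : C(Y, Y) := f.comp gs with hbdef
  have hKb0' : ∀ β : ↥B, Kb (β, 0) = b (β : Y) := by
    intro β
    rw [hKb0]
    show _ = f (gs (β : Y))
    rw [hgsA]
    rfl
  obtain ⟨R', hR'0, hR'B⟩ := hNhep Y b Kb (fun β => (hKb0' β))
  set b₁ : C(Y, Y) := cend R' with hb₁
  have hb₁B : ∀ y ∈ B, b₁ y = y := by
    intro y hy
    show R' (y, 1) = y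
    have := hR'B ⟨y, hy⟩ 1
    rw [show ((⟨y, hy⟩ : ↥B) : Y) = y from rfl] at this
    rw [this, hKb1 ⟨y, hy⟩]
  -- free homotopy id ≃ b₁
  have he1 : ∀ y : Y, hsymm K' (y, 1) = hcompL f G (y, 0) := by
    intro y
    simp only [hsymm_apply, hcompL_apply, unitInterval.symm_one]
    rw [hK'0, hG0]
  have he2 : ∀ y : Y, hconcat (hsymm K') (hcompL f G) he1 (y, 1) =
      hcompL f (hcompR Eψ g) (y, 0) := by
    intro y
    rw [hconcat_one]
    simp only [hcompL_apply, hcompR_apply]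
    rw [hEψ0]
    rfl
  have he3 : ∀ y : Y, hconcat (hconcat (hsymm K') (hcompL f G) he1)
      (hcompL f (hcompR Eψ g)) he2 (y, 1) = R' (y, 0) := by
    intro y
    rw [hconcat_one, hR'0]
    simp only [hcompL_apply, hcompR_apply]
    rw [hEψ1]
    rfl
  set D' : C(Y × I, Y) := hconcat (hconcat (hconcat (hsymm K') (hcompL f G) he1)
      (hcompL f (hcompR Eψ g)) he2) R' he3 with hD'
  have hD'0 : ∀ y, D' (y, 0) = y := by
    intro y
    rw [hD', hconcat_zero, hconcat_zero, hconcat_zero]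
    simp only [hsymm_apply, unitInterval.symm_zero]
    rw [hK'1]
  have hD'1 : ∀ y, D' (y, 1) = b₁ y := by
    intro y
    rw [hD', hconcat_one]
    rfl
  obtain ⟨χ, Eχ, Q, Q', hχB, hEχ0, hEχ1, hQ0, hQ1, hQB, hQ'0, hQ'1, hQ'B⟩ :=
    dold_two hNhep b₁ hb₁B D' hD'0 hD'1
  -- the filtered inverse
  set gf : C(Y, X) := gs.comp χ with hgf
  have hgsfil : ∀ j (y : Y), (y : N) ∈ Nf j → ((gs y : X) : M) ∈ Mf j := by
    intro j y hy
    rcases le_or_gt j k with hj | hj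
    · have hyB : y ∈ B := hNmono hj hy
      rw [show y = ((⟨y, hyB⟩ : ↥B) : Y) from rfl, hgsA ⟨y, hyB⟩]
      exact hg0 j _ hy
    · exact hMmono hj (gs y).2
  have hgffil : ∀ j (y : Y), (y : N) ∈ Nf j → ((gf y : X) : M) ∈ Mf j := by
    intro j y hy
    rcases le_or_gt j k with hj | hj
    · have hyB : y ∈ B := hNmono hj hy
      rw [hgf]
      show ((gs (χ y) : X) : M) ∈ Mf j
      rw [show y = ((⟨y, hyB⟩ : ↥B) : Y) from rfl, hχB _ hyB]
      exact hgsfil j y hy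
    · exact hMmono hj (gf y).2
  -- the homotopy K for f ∘ gf
  have hk1 : ∀ y : Y, hcompR R' χ (y, 1) = Q' (y, 0) := by
    intro y
    simp only [hcompR_apply]
    rw [hQ'0]
    rfl
  set Kf : C(Y × I, Y) := hconcat (hcompR R' χ) Q' hk1 with hKf
  have hKf0 : ∀ y, Kf (y, 0) = f (gf y) := by
    intro y
    rw [hKf, hconcat_zero]
    simp only [hcompR_apply]
    rw [hR'0]
    rfl
  have hKf1 : ∀ y, Kf (y, 1) = y := by
    intro y
    rw [hKf, hconcat_one, hQ'1]
  have hKffil : ∀ j (y : Y) (t : I), (y : N) ∈ Nf j → ((Kf (y, t) : Y) : N) ∈ Nf j := by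
    intro j y t hy
    rcases le_or_gt j k with hj | hj
    · have hyB : y ∈ B := hNmono hj hy
      rcases hconcat_cases (hcompR R' χ) Q' hk1 y t with ⟨s, hs⟩ | ⟨s, hs⟩
      · rw [hKf, hs]
        simp only [hcompR_apply]
        rw [show y = ((⟨y, hyB⟩ : ↥B) : Y) from rfl, hχB _ hyB,
          hR'B ⟨y, hyB⟩ s, hKb_apply]
        exact hK0fil j _ s hy
      · rw [hKf, hs, hQ'B y hyB s]
        exact hy
    · exact hNmono hj (Kf (y, t)).2
  -- the homotopy H for gf ∘ f
  have hh1 : ∀ x : X, hsymm (hcompR Nh (gf.comp f)) (x, 1) =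
      hcompL gs (hcompR Kf f) (x, 0) := by
    intro x
    simp only [hsymm_apply, hcompR_apply, hcompL_apply, unitInterval.symm_one,
      ContinuousMap.comp_apply]
    rw [hNh0, hKf0]
  have hh2 : ∀ x : X, hconcat (hsymm (hcompR Nh (gf.comp f))) (hcompL gs (hcompR Kf f)) hh1
      (x, 1) = Nh (x, 0) := by
    intro x
    rw [hconcat_one, hNh0]
    simp only [hcompL_apply, hcompR_apply]
    rw [hKf1]
  set Hf : C(X × I, X) := hconcat (hconcat (hsymm (hcompR Nh (gf.comp f)))
      (hcompL gs (hcompR Kf f)) hh1) Nh hh2 with hHf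
  have hHf0 : ∀ x, Hf (x, 0) = gf (f x) := by
    intro x
    rw [hHf, hconcat_zero, hconcat_zero]
    simp only [hsymm_apply, hcompR_apply, unitInterval.symm_zero, ContinuousMap.comp_apply]
    rw [hNh1]
  have hHf1 : ∀ x, Hf (x, 1) = x := by
    intro x
    rw [hHf, hconcat_one, hNh1]
  have hHffil : ∀ j (x : X) (t : I), (x : M) ∈ Mf j → ((Hf (x, t) : X) : M) ∈ Mf j := by
    intro j x t hx
    rcases le_or_gt j k with hj | hj
    · have hffil : ((f x : Y) : N) ∈ Nf j := hF j hx
      have hgffx : ((gf (f x) : X) : M) ∈ Mf j := hgffil j _ hffil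
      rcases hconcat_cases (hconcat (hsymm (hcompR Nh (gf.comp f)))
          (hcompL gs (hcompR Kf f)) hh1) Nh hh2 x t with ⟨s, hs⟩ | ⟨s, hs⟩
      · rw [hHf, hs]
        rcases hconcat_cases (hsymm (hcompR Nh (gf.comp f)))
            (hcompL gs (hcompR Kf f)) hh1 x s with ⟨u, hu⟩ | ⟨u, hu⟩
        · rw [hu]
          simp only [hsymm_apply, hcompR_apply, ContinuousMap.comp_apply]
          exact hNhfil j _ _ hgffx
        · rw [hu]
          simp only [hcompL_apply, hcompR_apply]
          exact hgsfil j _ (hKffil j _ u hffil)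
      · rw [hHf, hs]
        exact hNhfil j x s hx
    · exact hMmono hj (Hf (x, t)).2
  exact ⟨gf, hgffil, ⟨Hf, hHffil, hHf0, hHf1⟩, ⟨Kf, hKffil, hKf0, hKf1⟩⟩

end Step

theorem statement_0 {M N : Type u} [TopologicalSpace M] [TopologicalSpace N]
    (Mf : ℕ → Set M) (Nf : ℕ → Set N)
    (hMmono : Monotone Mf) (hNmono : Monotone Nf)
    (hMunion : ⋃ n, Mf n = univ) (hNunion : ⋃ n, Nf n = univ)
    (L : ℕ) (hMfin : ∀ n, L ≤ n → Mf n = univ) (hNfin : ∀ n, L ≤ n → Nf n = univ)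
    (hMcof : ∀ n, IsClosedCofibration ↥(Mf (n + 1)) {x : ↥(Mf (n + 1)) | (x : M) ∈ Mf n})
    (hNcof : ∀ n, IsClosedCofibration ↥(Nf (n + 1)) {x : ↥(Nf (n + 1)) | (x : N) ∈ Nf n})
    (F : C(M, N)) (hF : IsFilteredMap Mf Nf F)
    (hFn : ∀ n, IsHomotopyEquivMap (restrictCM F (hF n))) :
    IsFilteredHomotopyEquiv Mf Nf F := by
  classical
  have main : ∀ k, GoodInv Mf Nf F k (hF k) := by
    intro k
    induction k with
    | zero =>
      obtain ⟨g0, ⟨H0, hH00, hH01⟩, ⟨K0, hK00, hK01⟩⟩ := hFn 0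
      refine ⟨g0, ?_, ⟨H0, ?_, hH00, hH01⟩, ⟨K0, ?_, hK00, hK01⟩⟩
      · intro j y hy; exact hMmono (Nat.zero_le j) (g0 y).2
      · intro j x t hx; exact hMmono (Nat.zero_le j) (H0 (x, t)).2
      · intro j y t hy; exact hNmono (Nat.zero_le j) (K0 (y, t)).2
    | succ k ih =>
      exact step Mf Nf hMmono hNmono k (hMcof k).2 (hNcof k).2 F hF ih (hFn (k + 1))
  obtain ⟨gL, hgL, ⟨HL, hHLfil, hHL0, hHL1⟩, ⟨KL, hKLfil, hKL0, hKL1⟩⟩ := main L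
  have hMuniv : Mf L = univ := hMfin L le_rfl
  have hNuniv : Nf L = univ := hNfin L le_rfl
  set eM : C(M, ↥(Mf L)) := ⟨fun m => ⟨m, hMuniv.symm ▸ mem_univ m⟩,
    continuous_id.subtype_mk _⟩ with heM
  set eN : C(N, ↥(Nf L)) := ⟨fun n => ⟨n, hNuniv.symm ▸ mem_univ n⟩,
    continuous_id.subtype_mk _⟩ with heN
  refine ⟨(ιCM (Mf L)).comp (gL.comp eN), hF, ?_,
    ⟨(ιCM (Mf L)).comp (HL.comp (eM.prodMap (ContinuousMap.id I))), ?_, ?_, ?_⟩,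
    ⟨(ιCM (Nf L)).comp (KL.comp (eN.prodMap (ContinuousMap.id I))), ?_, ?_, ?_⟩⟩
  · intro n y hy
    exact hgL n (eN y) hy
  · intro n x hx t
    exact hHLfil n (eM x) t hx
  · intro x
    show ((HL (eM x, 0) : ↥(Mf L)) : M) = _
    rw [hHL0]
    have h2 : restrictCM F (hF L) (eM x) = eN (F x) := Subtype.ext rfl
    rw [h2]
    rfl
  · intro x
    show ((HL (eM x, 1) : ↥(Mf L)) : M) = x
    rw [hHL1]
    rfl
  · intro n y hy t
    exact hKLfil n (eN y) t hy
  · intro y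
    show ((KL (eN y, 0) : ↥(Nf L)) : N) = _
    rw [hKL0]
    rfl
  · intro y
    show ((KL (eN y, 1) : ↥(Nf L)) : N) = y
    rw [hKL1]
    rfl
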